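/- Fix 1/2 < α < 1, κ₀ > 0, λ ∈ ℝ, and v₀, w₁ ∈ (0,1). With γ_σ(v, w, t) as defined below, there is a constant c depending only on α, v₀ and w₁ such that |γ_σ(v, w, t)| ≤ c λ² for all σ ∈ (0, κ₀], all t ≥ 1, and all v, w ∈ ℝ³ with |v| ≤ v₀ and |w| ≤ w₁; in particular the bound is uniform in σ and t. -/

import Mathlib

/-!
With `x = e·w - 1` and `d = 1 - e·v` we have `|x| ≥ 1 - w₁` and `d ≥ 1 - v₀` on the whole
sphere. The `r`-integral is elementary:
`∫_σ^{κ₀τ^{-α}} cos (r τ x) dr = (sin (κ₀ x τ^{1-α}) - sin (σ x τ)) / (τ x)`.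
After moving the `τ`-integral inside the angular ones, the substitution `u = c τ^β` gives
`∫ sin (c τ^β) / τ dτ = β⁻¹ ∫ sinc u du`, a difference of two values of the sine integral `Si`,
and `|Si| ≤ 3` (bound `sinc` by `1` on `[0, 1]` and integrate `sin u / u` by parts on `[1, ∞)`).
Hence the `τ`-integral is bounded by `6 / (1 - α) + 6` whatever `σ` and `t` are.
-/

open scoped RealInnerProductSpace

noncomputable def sphDir (θ φ : ℝ) : EuclideanSpace ℝ (Fin 3) :=
  WithLp.toLp 2 ![Real.sin θ * Real.cos φ, Real.sin θ * Real.sin φ, Real.cos θ]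

/-- The Dollard phase `γ_σ(v, w, t)` of the paper (with slow cutoff `σ_τ^S = κ₀ τ^{-α}`
and `t_σ = min(t, (κ₀/σ)^{1/α})`), with `w` in place of `∇E_{2,p,σ}` and `v` the cell
velocity. -/
noncomputable def gammaPhase (α κ₀ lam σ : ℝ) (v w : EuclideanSpace ℝ (Fin 3)) (t : ℝ) : ℝ :=
  -(lam ^ 2) * ∫ τ in (1:ℝ)..(min t ((κ₀ / σ) ^ (1 / α))),
      ∫ r in σ..(κ₀ * τ ^ (-α)),
        ∫ φ in (0:ℝ)..(2 * Real.pi),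
          ∫ θ in (0:ℝ)..Real.pi,
            Real.cos (r * τ * (⟪sphDir θ φ, w⟫ - 1)) / (1 - ⟪sphDir θ φ, v⟫) *
              Real.sin θ

open MeasureTheory Set Real intervalIntegral

namespace intervalIntegral

theorem integral_integral_swap_of_continuous {f : ℝ → ℝ → ℝ}
    (hf : Continuous (Function.uncurry f)) (a b c d : ℝ) :
    ∫ x in a..b, ∫ y in c..d, f x y = ∫ y in c..d, ∫ x in a..b, f x y := by
  simp only [intervalIntegral_eq_integral_uIoc, MeasureTheory.integral_smul]
  have hint : IntegrableOn (Function.uncurry f) (uIoc a b ×ˢ uIoc c d) :=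
    (hf.continuousOn.integrableOn_compact (isCompact_uIcc.prod isCompact_uIcc)).mono_set
      (prod_mono uIoc_subset_uIcc uIoc_subset_uIcc)
  rw [integral_integral_swap (by rwa [Measure.prod_restrict]), smul_comm]

theorem integral_integral_integral_swap_of_continuous {f : ℝ → ℝ → ℝ → ℝ}
    (hf : Continuous fun p : ℝ × ℝ × ℝ ↦ f p.1 p.2.1 p.2.2) (a b c d e g : ℝ) :
    ∫ x in a..b, ∫ y in c..d, ∫ z in e..g, f x y z
      = ∫ y in c..d, ∫ z in e..g, ∫ x in a..b, f x y z := by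
  rw [integral_integral_swap_of_continuous (by fun_prop) a b c d]
  exact integral_congr fun y _ ↦ integral_integral_swap_of_continuous (by fun_prop) a b e g

theorem integral_integral_integral_swap_of_continuousOn {f : ℝ → ℝ → ℝ → ℝ} {a b : ℝ}
    (hf : ContinuousOn (fun p : ℝ × ℝ × ℝ ↦ f p.1 p.2.1 p.2.2) (uIcc a b ×ˢ univ))
    (c d e g : ℝ) :
    ∫ x in a..b, ∫ y in c..d, ∫ z in e..g, f x y z
      = ∫ y in c..d, ∫ z in e..g, ∫ x in a..b, f x y z := by
  set clamp : ℝ → ℝ := fun x ↦ projIcc (min a b) (max a b) min_le_max x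
  have hclamp : ∀ x ∈ uIcc a b, clamp x = x := fun x hx ↦ congrArg Subtype.val (projIcc_of_mem _ hx)
  have hfclamp : Continuous fun p : ℝ × ℝ × ℝ ↦ f (clamp p.1) p.2.1 p.2.2 :=
    hf.comp_continuous (f := fun p : ℝ × ℝ × ℝ ↦ (clamp p.1, p.2))
      (((continuous_subtype_val.comp continuous_projIcc).comp continuous_fst).prodMk
        continuous_snd) fun p ↦ ⟨(projIcc (min a b) (max a b) min_le_max p.1).2, mem_univ _⟩
  calc ∫ x in a..b, ∫ y in c..d, ∫ z in e..g, f x y z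
      = ∫ x in a..b, ∫ y in c..d, ∫ z in e..g, f (clamp x) y z :=
        integral_congr fun x hx ↦ by rw [hclamp x hx]
    _ = ∫ y in c..d, ∫ z in e..g, ∫ x in a..b, f (clamp x) y z :=
        integral_integral_integral_swap_of_continuous hfclamp a b c d e g
    _ = ∫ y in c..d, ∫ z in e..g, ∫ x in a..b, f x y z :=
        integral_congr fun y _ ↦ integral_congr fun z _ ↦
          integral_congr fun x hx ↦ by rw [hclamp x hx]

theorem abs_integral_integral_le_of_abs_le {f : ℝ → ℝ → ℝ} {C : ℝ} (h : ∀ x y, |f x y| ≤ C)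
    (a b c d : ℝ) : |∫ x in a..b, ∫ y in c..d, f x y| ≤ C * |d - c| * |b - a| := by
  simpa only [Real.norm_eq_abs] using norm_integral_le_of_norm_le_const fun x _ ↦
    norm_integral_le_of_norm_le_const fun y _ ↦ (Real.norm_eq_abs (f x y)).trans_le (h x y)

end intervalIntegral

theorem integral_sin_div_eq {a b : ℝ} (ha : 0 < a) (hb : 0 < b) :
    ∫ u in a..b, sin u / u = cos a / a - cos b / b - ∫ u in a..b, cos u / u ^ 2 := by
  have hne : ∀ u ∈ uIcc a b, u ≠ 0 := fun u hu ↦ ((lt_min ha hb).trans_le hu.1).ne'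
  have hsin : IntervalIntegrable (fun u ↦ sin u / u) volume a b :=
    (ContinuousOn.div (by fun_prop) (by fun_prop) hne).intervalIntegrable
  have hcos : IntervalIntegrable (fun u ↦ cos u / u ^ 2) volume a b :=
    (ContinuousOn.div (by fun_prop) (by fun_prop) fun u hu ↦
      pow_ne_zero 2 (hne u hu)).intervalIntegrable
  have h := integral_eq_sub_of_hasDerivAt (fun u hu ↦
    ((hasDerivAt_cos u).fun_neg.fun_div (hasDerivAt_id' u) (hne u hu)).congr_deriv
      (by field_simp; ring)) (hsin.add hcos)
  rw [integral_add hsin hcos] at h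
  linarith [neg_div a (cos a), neg_div b (cos b)]

theorem abs_integral_cos_div_sq_le {a b : ℝ} (ha : 0 < a) (hab : a ≤ b) :
    |∫ u in a..b, cos u / u ^ 2| ≤ 1 / a - 1 / b := by
  have hpos : ∀ u ∈ uIcc a b, 0 < u := fun u hu ↦ (lt_min ha (ha.trans_le hab)).trans_le hu.1
  have hsq : ∀ u ∈ uIcc a b, u ^ 2 ≠ 0 := fun u hu ↦ pow_ne_zero 2 (hpos u hu).ne'
  have hcos : IntervalIntegrable (fun u ↦ cos u / u ^ 2) volume a b :=
    (ContinuousOn.div (by fun_prop) (by fun_prop) hsq).intervalIntegrable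
  have hinv : IntervalIntegrable (fun u ↦ 1 / u ^ 2) volume a b :=
    (ContinuousOn.div (by fun_prop) (by fun_prop) hsq).intervalIntegrable
  calc |∫ u in a..b, cos u / u ^ 2|
      ≤ ∫ u in a..b, |cos u / u ^ 2| := abs_integral_le_integral_abs hab
    _ ≤ ∫ u in a..b, 1 / u ^ 2 := by
        refine integral_mono_on hab hcos.abs hinv fun u hu ↦ ?_
        have hu2 := pow_pos (hpos u (Icc_subset_uIcc hu)) 2
        rw [abs_div, abs_of_pos hu2]
        exact div_le_div_of_nonneg_right (abs_cos_le_one u) hu2.le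
    _ = 1 / a - 1 / b := by
        rw [integral_eq_sub_of_hasDerivAt (fun u hu ↦ (hasDerivAt_inv (hpos u hu).ne').fun_neg
          |>.congr_deriv (by rw [neg_neg, one_div])) hinv]
        ring

theorem abs_integral_sin_div_le {a b : ℝ} (ha : 0 < a) (hab : a ≤ b) :
    |∫ u in a..b, sin u / u| ≤ 2 / a := by
  have hb : 0 < b := ha.trans_le hab
  have hend : ∀ u, 0 < u → |cos u / u| ≤ 1 / u := fun u hu ↦ by
    rw [abs_div, abs_of_pos hu]; gcongr; exact abs_cos_le_one u
  calc |∫ u in a..b, sin u / u|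
      ≤ |cos a / a| + |cos b / b| + |∫ u in a..b, cos u / u ^ 2| := by
        rw [integral_sin_div_eq ha hb]
        exact (abs_sub _ _).trans (add_le_add (abs_sub _ _) le_rfl)
    _ ≤ 1 / a + 1 / b + (1 / a - 1 / b) :=
        add_le_add (add_le_add (hend a ha) (hend b hb)) (abs_integral_cos_div_sq_le ha hab)
    _ = 2 / a := by ring

noncomputable def sineIntegral (x : ℝ) : ℝ := ∫ u in (0 : ℝ)..x, sinc u

theorem abs_sineIntegral_le_of_nonneg {x : ℝ} (hx : 0 ≤ x) : |sineIntegral x| ≤ 3 := by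
  have hsinc : ∀ u, ‖sinc u‖ ≤ 1 := abs_sinc_le_one
  rcases le_total x 1 with hx1 | hx1
  · calc |sineIntegral x| ≤ 1 * |x - 0| := norm_integral_le_of_norm_le_const fun u _ ↦ hsinc u
      _ ≤ 3 := by rw [sub_zero, abs_of_nonneg hx]; linarith
  · have hhead : |∫ u in (0 : ℝ)..1, sinc u| ≤ 1 := by
      simpa using norm_integral_le_of_norm_le_const (a := 0) (b := 1) fun u _ ↦ hsinc u
    have htail : |∫ u in (1 : ℝ)..x, sinc u| ≤ 2 := by
      rw [integral_congr fun u hu ↦ sinc_of_ne_zero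
        (zero_lt_one.trans_le (by rw [uIcc_of_le hx1] at hu; exact hu.1)).ne']
      simpa using abs_integral_sin_div_le one_pos hx1
    rw [sineIntegral, ← integral_add_adjacent_intervals (b := 1)
      (continuous_sinc.intervalIntegrable _ _) (continuous_sinc.intervalIntegrable _ _)]
    linarith [abs_add_le (∫ u in (0 : ℝ)..1, sinc u) (∫ u in (1 : ℝ)..x, sinc u)]

theorem sineIntegral_neg (x : ℝ) : sineIntegral (-x) = -sineIntegral x := by
  have h := integral_comp_neg (a := 0) (b := x) sinc
  simp only [sinc_neg, neg_zero] at h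
  rw [sineIntegral, sineIntegral, h, integral_symm]

theorem abs_sineIntegral_le (x : ℝ) : |sineIntegral x| ≤ 3 := by
  rcases le_total 0 x with hx | hx
  · exact abs_sineIntegral_le_of_nonneg hx
  · simpa [sineIntegral_neg, abs_neg] using abs_sineIntegral_le_of_nonneg (neg_nonneg.mpr hx)

theorem abs_integral_sinc_le (a b : ℝ) : |∫ u in a..b, sinc u| ≤ 6 := by
  rw [← integral_interval_sub_left (a := 0) (continuous_sinc.intervalIntegrable _ _)
    (continuous_sinc.intervalIntegrable _ _)]
  change |sineIntegral b - sineIntegral a| ≤ 6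
  linarith [abs_sub (sineIntegral b) (sineIntegral a), abs_sineIntegral_le a,
    abs_sineIntegral_le b]

theorem integral_sin_mul_rpow_div {a b c β : ℝ} (ha : 0 < a) (hb : 0 < b) (hβ : β ≠ 0) :
    ∫ τ in a..b, sin (c * τ ^ β) / τ = β⁻¹ * ∫ u in c * a ^ β..c * b ^ β, sinc u := by
  have hpos : ∀ τ ∈ uIcc a b, 0 < τ := fun τ hτ ↦ lt_min ha hb |>.trans_le hτ.1
  have hderiv : ∀ τ ∈ uIcc a b, HasDerivAt (fun τ ↦ c * τ ^ β) (c * (β * τ ^ (β - 1))) τ :=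
    fun τ hτ ↦ (hasDerivAt_rpow_const (Or.inl (hpos τ hτ).ne')).const_mul c
  have hcont : ContinuousOn (fun τ ↦ c * (β * τ ^ (β - 1))) (uIcc a b) :=
    continuousOn_const.mul (continuousOn_const.mul
      (continuousOn_id.rpow_const fun τ hτ ↦ Or.inl (hpos τ hτ).ne'))
  rw [← integral_comp_mul_deriv hderiv hcont continuous_sinc, ← intervalIntegral.integral_const_mul]
  refine integral_congr fun τ hτ ↦ ?_
  have hτ := hpos τ hτ
  rcases eq_or_ne c 0 with rfl | hc
  · simp
  · rw [Function.comp_apply, sinc_of_ne_zero (mul_ne_zero hc (rpow_pos_of_pos hτ β).ne'),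
      rpow_sub_one hτ.ne']
    field_simp

theorem abs_integral_sin_mul_rpow_div_le {a b c β : ℝ} (ha : 0 < a) (hb : 0 < b) (hβ : 0 < β) :
    |∫ τ in a..b, sin (c * τ ^ β) / τ| ≤ 6 / β := by
  rw [integral_sin_mul_rpow_div ha hb hβ.ne', abs_mul, abs_inv, abs_of_pos hβ, inv_mul_eq_div]
  gcongr
  exact abs_integral_sinc_le _ _

theorem intervalIntegrable_sin_mul_rpow_div {a b c β : ℝ} (ha : 0 < a) (hb : 0 < b) :
    IntervalIntegrable (fun τ ↦ sin (c * τ ^ β) / τ) volume a b := by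
  have hne : ∀ τ ∈ uIcc a b, τ ≠ 0 := fun τ hτ ↦ ((lt_min ha hb).trans_le hτ.1).ne'
  exact (ContinuousOn.div (continuous_sin.comp_continuousOn (continuousOn_const.mul
    (continuousOn_id.rpow_const fun τ hτ ↦ Or.inl (hne τ hτ)))) continuousOn_id
    hne).intervalIntegrable

theorem abs_integral_sin_mul_rpow_div_sub_le {a b c₁ c₂ β : ℝ} (ha : 0 < a) (hb : 0 < b)
    (hβ : 0 < β) :
    |∫ τ in a..b, (sin (c₁ * τ ^ β) / τ - sin (c₂ * τ) / τ)| ≤ 6 / β + 6 := by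
  have hlin := abs_integral_sin_mul_rpow_div_le (c := c₂) ha hb one_pos
  have hlin' := intervalIntegrable_sin_mul_rpow_div (c := c₂) (β := 1) ha hb
  simp only [rpow_one, div_one] at hlin hlin'
  rw [integral_sub (intervalIntegrable_sin_mul_rpow_div ha hb) hlin']
  exact (abs_sub _ _).trans (add_le_add (abs_integral_sin_mul_rpow_div_le ha hb hβ) hlin)

theorem integral_cos_mul_mul {a b τ x : ℝ} (h : τ * x ≠ 0) :
    ∫ r in a..b, cos (r * τ * x) = (sin (b * τ * x) - sin (a * τ * x)) / (τ * x) := by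
  simp only [mul_assoc]
  rw [integral_comp_mul_right cos h, integral_cos, smul_eq_mul, inv_mul_eq_div]

theorem integral_cos_slowCutoff_eq {α κ₀ σ T φ₀ φ₁ θ₀ θ₁ : ℝ} {x g : ℝ → ℝ → ℝ}
    (hx : Continuous fun q : ℝ × ℝ ↦ x q.1 q.2) (hg : Continuous fun q : ℝ × ℝ ↦ g q.1 q.2)
    (hx0 : ∀ θ φ, x θ φ ≠ 0) (hT : 0 < T) :
    ∫ τ in 1..T, ∫ r in σ..κ₀ * τ ^ (-α), ∫ φ in φ₀..φ₁, ∫ θ in θ₀..θ₁,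
        cos (r * τ * x θ φ) * g θ φ
      = ∫ φ in φ₀..φ₁, ∫ θ in θ₀..θ₁,
          (∫ τ in 1..T, (sin (κ₀ * x θ φ * τ ^ (1 - α)) / τ - sin (σ * x θ φ * τ) / τ))
            * (g θ φ / x θ φ) := by
  have hpos : ∀ τ ∈ uIcc 1 T, 0 < τ := fun τ hτ ↦ (lt_min one_pos hT).trans_le hτ.1
  have hr : ∀ τ ∈ uIcc 1 T,
      ∫ r in σ..κ₀ * τ ^ (-α), ∫ φ in φ₀..φ₁, ∫ θ in θ₀..θ₁, cos (r * τ * x θ φ) * g θ φ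
        = ∫ φ in φ₀..φ₁, ∫ θ in θ₀..θ₁,
            (sin (κ₀ * x θ φ * τ ^ (1 - α)) / τ - sin (σ * x θ φ * τ) / τ) * (g θ φ / x θ φ) := by
    intro τ hτ
    have hτ := hpos τ hτ
    rw [integral_integral_integral_swap_of_continuous (by fun_prop)]
    refine integral_congr fun φ _ ↦ integral_congr fun θ _ ↦ ?_
    rw [intervalIntegral.integral_mul_const, integral_cos_mul_mul (mul_ne_zero hτ.ne' (hx0 θ φ)),
      show (1 : ℝ) - α = 1 + -α by ring, rpow_add hτ, rpow_one]
    field_simp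
  have hk : ContinuousOn (fun p : ℝ × ℝ × ℝ ↦
      (sin (κ₀ * x p.2.2 p.2.1 * p.1 ^ (1 - α)) / p.1 - sin (σ * x p.2.2 p.2.1 * p.1) / p.1)
        * (g p.2.2 p.2.1 / x p.2.2 p.2.1)) (uIcc 1 T ×ˢ univ) := by
    have hne : ∀ p ∈ uIcc 1 T ×ˢ (univ : Set (ℝ × ℝ)), p.1 ≠ 0 := fun p hp ↦ (hpos p.1 hp.1).ne'
    have hxc : Continuous fun p : ℝ × ℝ × ℝ ↦ x p.2.2 p.2.1 := by fun_prop
    refine ((ContinuousOn.div ?_ continuousOn_fst hne).sub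
      (ContinuousOn.div (by fun_prop) continuousOn_fst hne)).mul
      (Continuous.div (by fun_prop) hxc fun p ↦ hx0 _ _).continuousOn
    exact continuous_sin.comp_continuousOn ((continuous_const.mul hxc).continuousOn.mul
      (continuousOn_fst.rpow_const fun p hp ↦ Or.inl (hne p hp)))
  rw [integral_congr hr, integral_integral_integral_swap_of_continuousOn hk]
  simp only [intervalIntegral.integral_mul_const]

@[fun_prop]
theorem continuous_sphDir : Continuous fun p : ℝ × ℝ ↦ sphDir p.1 p.2 := by
  unfold sphDir; fun_prop

theorem norm_sphDir (θ φ : ℝ) : ‖sphDir θ φ‖ = 1 := by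
  rw [EuclideanSpace.norm_eq, Fin.sum_univ_three, sqrt_eq_one]
  simp only [sphDir, PiLp.toLp_apply, Matrix.cons_val, norm_eq_abs, sq_abs]
  nlinarith [sin_sq_add_cos_sq θ, sin_sq_add_cos_sq φ]

theorem inner_sphDir_le (θ φ : ℝ) (u : EuclideanSpace ℝ (Fin 3)) : ⟪sphDir θ φ, u⟫ ≤ ‖u‖ := by
  simpa [norm_sphDir] using real_inner_le_norm (sphDir θ φ) u

theorem abs_sin_div_div_inner_sphDir_le {v w : EuclideanSpace ℝ (Fin 3)} {v₀ w₁ : ℝ}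
    (hv : ‖v‖ ≤ v₀) (hw : ‖w‖ ≤ w₁) (hv₀ : v₀ < 1) (hw₁ : w₁ < 1) (θ φ : ℝ) :
    |sin θ / (1 - ⟪sphDir θ φ, v⟫) / (⟪sphDir θ φ, w⟫ - 1)| ≤ 1 / ((1 - v₀) * (1 - w₁)) := by
  have hd : 1 - v₀ ≤ 1 - ⟪sphDir θ φ, v⟫ := by linarith [inner_sphDir_le θ φ v]
  have hx : 1 - w₁ ≤ |⟪sphDir θ φ, w⟫ - 1| := by
    rw [abs_sub_comm]; linarith [inner_sphDir_le θ φ w, le_abs_self (1 - ⟪sphDir θ φ, w⟫)]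
  have hd₀ : 0 < 1 - ⟪sphDir θ φ, v⟫ := (sub_pos.mpr hv₀).trans_le hd
  rw [abs_div, abs_div, div_div, abs_of_pos hd₀]
  exact div_le_div₀ zero_le_one (abs_sin_le_one θ) (by nlinarith)
    (mul_le_mul hd hx (by linarith) hd₀.le)

theorem gammaPhase_bound (α v₀ w₁ : ℝ) (hα₂ : α < 1)
    (hv₀' : v₀ < 1) (hw₁' : w₁ < 1) :
    ∃ c : ℝ, 0 < c ∧
      ∀ (κ₀ lam σ t : ℝ) (v w : EuclideanSpace ℝ (Fin 3)),
        0 < κ₀ → 0 < σ → σ ≤ κ₀ → 1 ≤ t → ‖v‖ ≤ v₀ → ‖w‖ ≤ w₁ →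
        |gammaPhase α κ₀ lam σ v w t| ≤ c * lam ^ 2 := by
  have hβ : 0 < 1 - α := sub_pos.mpr hα₂
  have h1v₀ : 0 < 1 - v₀ := sub_pos.mpr hv₀'
  have h1w₁ : 0 < 1 - w₁ := sub_pos.mpr hw₁'
  set C := (6 / (1 - α) + 6) * (1 / ((1 - v₀) * (1 - w₁)))
  refine ⟨C * π * (2 * π), by positivity, ?_⟩
  intro κ₀ lam σ t v w hκ₀ hσ _ ht hv hw
  have hlt : ∀ θ φ (u : EuclideanSpace ℝ (Fin 3)), ‖u‖ < 1 → ⟪sphDir θ φ, u⟫ < 1 :=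
    fun θ φ u hu ↦ (inner_sphDir_le θ φ u).trans_lt hu
  have hT : 0 < min t ((κ₀ / σ) ^ (1 / α)) := lt_min (by linarith) (by positivity)
  rw [gammaPhase, abs_mul, abs_neg, abs_pow, sq_abs, mul_comm]
  gcongr
  simp only [div_mul_eq_mul_div, mul_div_assoc]
  rw [integral_cos_slowCutoff_eq (by fun_prop)
    (continuous_sin.comp continuous_fst |>.div (by fun_prop) fun _ ↦
      (sub_pos.mpr (hlt _ _ v (hv.trans_lt hv₀'))).ne')
    (fun θ φ ↦ (sub_neg.mpr (hlt θ φ w (hw.trans_lt hw₁'))).ne) hT]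
  refine (abs_integral_integral_le_of_abs_le (fun φ θ ↦ ?_) _ _ _ _).trans_eq
    (by rw [sub_zero, sub_zero, abs_of_pos pi_pos, abs_of_pos (by positivity)])
  rw [abs_mul]
  exact mul_le_mul (abs_integral_sin_mul_rpow_div_sub_le one_pos hT hβ)
    (abs_sin_div_div_inner_sphDir_le hv hw hv₀' hw₁' θ φ) (abs_nonneg _) (by positivity)
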